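/- arXiv:1609.07043 — 4 statements merged into one kernel-verified Lean document; each statement's English description precedes it below -/
import Mathlib

section
/- Let G be a graph all of whose degrees are at most D < ∞, let p ∈ [0,1] and let c < 1. Suppose that for every vertex x of G there exists a finite connected vertex set S_x with x ∈ S_x and φ_p^x(S_x) ≤ c. Then Bernoulli(p) bond percolation on G almost surely has no infinite cluster; that is, P_p(|C_v| = ∞) = 0 for every vertex v of G. -/
/-!
Explore the open cluster of `v` in stages. At each stage the cluster of the current vertex `x`
inside `S_x` (minus the vertices explored so far) has to leave `S_x` through an open boundary
edge `(u, w)`; the probability of this is at most `φ_p^x(S_x) ≤ c`, and the exploration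
restarts at `w`. The events of distinct stages depend on disjoint sets of edges, so surviving
`n` stages has probability at most `c^n`. An infinite cluster survives every number of stages:
the explored part is finite and, the degrees being finite, has finitely many exits, so one of
them still leads to an infinite cluster. Letting `n → ∞` gives the claim.
-/

open MeasureTheory ENNReal

namespace PercolationPaper

variable {V : Type*}

/-- The spanning subgraph of `G` consisting of the edges that are open in the
configuration `ω`. -/
def openSG (G : SimpleGraph V) (ω : Sym2 V → Bool) : SimpleGraph V where
  Adj a b := G.Adj a b ∧ ω s(a, b) = true
  symm := ⟨fun a b h => ⟨h.1.symm, by rw [Sym2.eq_swap]; exact h.2⟩⟩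
  loopless := ⟨fun a h => G.loopless.irrefl a h.1⟩

/-- The open cluster of the vertex `v` in the configuration `ω`. -/
def cluster (G : SimpleGraph V) (ω : Sym2 V → Bool) (v : V) : Set V :=
  {x | (openSG G ω).Reachable v x}

/-- The subgraph of open edges both of whose endpoints lie in `S`:
`x ↔ y in S` is reachability in this graph. -/
def openIn (G : SimpleGraph V) (S : Set V) (ω : Sym2 V → Bool) : SimpleGraph V where
  Adj a b := G.Adj a b ∧ a ∈ S ∧ b ∈ S ∧ ω s(a, b) = true
  symm := ⟨fun a b h => ⟨h.1.symm, h.2.2.1, h.2.1, by rw [Sym2.eq_swap]; exact h.2.2.2⟩⟩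
  loopless := ⟨fun a h => G.loopless.irrefl a h.1⟩

/-- `P` is Bernoulli(`p`) bond percolation on `G`: a probability measure on
configurations under which, for any finite set `F` of edges of `G`, the states of the
edges of `F` are independent, each open with probability `p`. -/
def IsBernoulli (G : SimpleGraph V) (p : ℝ) (P : Measure (Sym2 V → Bool)) : Prop :=
  IsProbabilityMeasure P ∧
    ∀ F : Finset (Sym2 V), (↑F ⊆ G.edgeSet) → ∀ f : Sym2 V → Bool,
      P {ω | ∀ e ∈ F, ω e = f e} =
        ∏ e ∈ F, (if f e then ENNReal.ofReal p else ENNReal.ofReal (1 - p))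

/-- `φ_p^x(S) = p · Σ_{(u,w) : u∈S, w∉S, u∼w} P_p(x ↔ u in S)`. -/
noncomputable def phi (G : SimpleGraph V) (P : Measure (Sym2 V → Bool)) (p : ℝ)
    (x : V) (S : Set V) : ℝ≥0∞ :=
  ENNReal.ofReal p *
    ∑' d : {d : V × V // G.Adj d.1 d.2 ∧ d.1 ∈ S ∧ d.2 ∉ S},
      P {ω | (openIn G S ω).Reachable x d.1.1}

/-- The expected number of vertices of the open cluster of `v`. -/
noncomputable def expCluster (G : SimpleGraph V) (P : Measure (Sym2 V → Bool)) (v : V) :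
    ℝ≥0∞ :=
  ∫⁻ ω, ((cluster G ω v).encard : ℝ≥0∞) ∂P

/-- The ball of radius `r` around `v` in the graph metric of `G`. -/
def gball (G : SimpleGraph V) (v : V) (r : ℕ) : Set V :=
  {x | ∃ w : G.Walk v x, w.length ≤ r}

/-- All degrees of `G` are at most `D`. -/
def DegLE (G : SimpleGraph V) (D : ℕ) : Prop :=
  ∀ v : V, (G.neighborSet v).encard ≤ D

open ProbabilityTheory Function

theorem _root_.Set.Finite.sym2 {α : Type*} {s : Set α} (hs : s.Finite) : s.sym2.Finite := by
  rw [Set.sym2_eq_mk_image]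
  exact (hs.prod hs).image _

theorem _root_.Set.sym2_mono {α : Type*} {s t : Set α} (h : s ⊆ t) : s.sym2 ⊆ t.sym2 :=
  fun _ hz => Set.mem_sym2_iff_subset.2 ((Set.mem_sym2_iff_subset.1 hz).trans h)

theorem _root_.SimpleGraph.setOf_reachable_eq_of_forall_adj_iff {H H' : SimpleGraph V} {x : V}
    {A : Set V} (hA : {y | H.Reachable x y} = A) (hadj : ∀ a ∈ A, ∀ b, H.Adj a b ↔ H'.Adj a b) :
    {y | H'.Reachable x y} = A := by
  have hreach : ∀ {y}, y ∈ A ↔ H.Reachable x y := fun {y} => by rw [← hA]; rfl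
  ext y
  constructor
  · intro hy
    replace hy := (SimpleGraph.reachable_iff_reflTransGen _ _).1 hy
    induction hy with
    | refl => exact hreach.2 .rfl
    | tail _ hbc ih => exact hreach.2 ((hreach.1 ih).trans ((hadj _ ih _).2 hbc).reachable)
  · intro hy
    induction (SimpleGraph.reachable_iff_reflTransGen _ _).1 (hreach.1 hy) with
    | refl => exact .rfl
    | tail hxb hbc ih =>
      have hb : _ ∈ A := hreach.2 ((SimpleGraph.reachable_iff_reflTransGen _ _).2 hxb)
      exact (ih hb).trans ((hadj _ hb _).1 hbc).reachable

theorem _root_.MeasureTheory.measure_iUnion_inter_le_mul {Ω ι : Type*} [MeasurableSpace Ω]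
    [Countable ι] {μ : Measure Ω} {C F : ι → Set Ω} {K : ℝ≥0∞}
    (hC : ∀ i, MeasurableSet (C i)) (hdisj : Pairwise (Disjoint on C))
    (hK : ∀ i, μ (C i ∩ F i) ≤ μ (C i) * K) :
    μ (⋃ i, C i ∩ F i) ≤ μ (⋃ i, C i) * K :=
  calc μ (⋃ i, C i ∩ F i)
    _ ≤ ∑' i, μ (C i ∩ F i) := measure_iUnion_le _
    _ ≤ ∑' i, μ (C i) * K := ENNReal.tsum_le_tsum hK
    _ = μ (⋃ i, C i) * K := by rw [ENNReal.tsum_mul_right, measure_iUnion hdisj hC]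

section Independence

variable {G : SimpleGraph V} {p : ℝ} {P : Measure (Sym2 V → Bool)}

def IsDeterminedBy (E : Set (Sym2 V → Bool)) (F : Set (Sym2 V)) : Prop :=
  ∀ ⦃ω ω'⦄, Set.EqOn ω ω' F → ω ∈ E → ω' ∈ E

theorem IsDeterminedBy.inter {E₁ E₂ : Set (Sym2 V → Bool)} {F₁ F₂ : Set (Sym2 V)}
    (h₁ : IsDeterminedBy E₁ F₁) (h₂ : IsDeterminedBy E₂ F₂) :
    IsDeterminedBy (E₁ ∩ E₂) (F₁ ∪ F₂) :=
  fun _ _ hω hE => ⟨h₁ (hω.mono Set.subset_union_left) hE.1,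
    h₂ (hω.mono Set.subset_union_right) hE.2⟩

theorem isDeterminedBy_edge (e : Sym2 V) : IsDeterminedBy {ω | ω e = true} {e} :=
  fun _ _ hω he => (hω rfl).symm.trans he

def configOn (F : Set (Sym2 V)) (ω : Sym2 V → Bool) : F → Bool := fun e => ω e

theorem measurable_configOn (F : Set (Sym2 V)) : Measurable (configOn F) :=
  Set.measurable_restrict F

theorem IsDeterminedBy.preimage_image_configOn {E : Set (Sym2 V → Bool)} {F : Set (Sym2 V)}
    (h : IsDeterminedBy E F) : configOn F ⁻¹' (configOn F '' E) = E := by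
  refine subset_antisymm ?_ (Set.subset_preimage_image _ _)
  rintro ω ⟨ω', hω', heq⟩
  exact h (fun e he => congrFun heq ⟨e, he⟩) hω'

theorem IsDeterminedBy.measurableSet {E : Set (Sym2 V → Bool)} {F : Set (Sym2 V)}
    (h : IsDeterminedBy E F) (hF : F.Finite) : MeasurableSet E := by
  have := hF.to_subtype
  rw [← h.preimage_image_configOn]
  exact measurable_configOn F .of_discrete

theorem IsBernoulli.measure_eqOn (hP : IsBernoulli G p P) {F : Set (Sym2 V)} (hF : F.Finite)
    (hFG : F ⊆ G.edgeSet) (f : Sym2 V → Bool) :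
    P {ω | Set.EqOn ω f F} =
      ∏ e ∈ hF.toFinset, if f e then ENNReal.ofReal p else ENNReal.ofReal (1 - p) := by
  simpa [Set.EqOn] using hP.2 hF.toFinset (by simpa using hFG) f

theorem IsBernoulli.measure_inter_eqOn (hP : IsBernoulli G p P) {F₁ F₂ : Set (Sym2 V)}
    (hF₁ : F₁.Finite) (hF₂ : F₂.Finite) (hd : Disjoint F₁ F₂) (hFG : F₁ ∪ F₂ ⊆ G.edgeSet)
    (f : Sym2 V → Bool) :
    P ({ω | Set.EqOn ω f F₁} ∩ {ω | Set.EqOn ω f F₂}) =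
      P {ω | Set.EqOn ω f F₁} * P {ω | Set.EqOn ω f F₂} := by
  classical
  rw [← Set.ofPred_and, ← funext fun ω => propext Set.eqOn_union,
    hP.measure_eqOn (hF₁.union hF₂) hFG, hP.measure_eqOn hF₁ (Set.subset_union_left.trans hFG),
    hP.measure_eqOn hF₂ (Set.subset_union_right.trans hFG), Set.Finite.toFinset_union hF₁ hF₂,
    Finset.prod_union (by simpa using hd)]

theorem IsBernoulli.indepFun_configOn (hP : IsBernoulli G p P) {F₁ F₂ : Set (Sym2 V)}
    (hF₁ : F₁.Finite) (hF₂ : F₂.Finite) (hd : Disjoint F₁ F₂) (hFG : F₁ ∪ F₂ ⊆ G.edgeSet) :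
    IndepFun (configOn F₁) (configOn F₂) P := by
  classical
  have := hF₁.to_subtype
  have := hF₂.to_subtype
  have := hP.1
  have hm₁ := measurable_configOn F₁
  have hm₂ := measurable_configOn F₂
  rw [indepFun_iff_map_prod_eq_prod_map_map hm₁.aemeasurable hm₂.aemeasurable]
  refine Measure.ext_of_singleton fun ⟨g₁, g₂⟩ => ?_
  let f : Sym2 V → Bool := fun e =>
    if h : e ∈ F₁ then g₁ ⟨e, h⟩ else if h : e ∈ F₂ then g₂ ⟨e, h⟩ else false
  have hfib₁ : configOn F₁ ⁻¹' {g₁} = {ω | Set.EqOn ω f F₁} := by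
    ext ω
    simp +contextual [configOn, funext_iff, Set.EqOn, f]
  have hfib₂ : configOn F₂ ⁻¹' {g₂} = {ω | Set.EqOn ω f F₂} := by
    ext ω
    simp +contextual [configOn, funext_iff, Set.EqOn, f, Set.disjoint_right.1 hd]
  rw [Measure.map_apply (hm₁.prodMk hm₂) (measurableSet_singleton _),
    ← Set.singleton_prod_singleton, Measure.prod_prod,
    Measure.map_apply hm₁ (measurableSet_singleton _),
    Measure.map_apply hm₂ (measurableSet_singleton _), Set.mk_preimage_prod, hfib₁, hfib₂]
  exact hP.measure_inter_eqOn hF₁ hF₂ hd hFG f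

theorem IsBernoulli.measure_inter_eq_mul (hP : IsBernoulli G p P) {E₁ E₂ : Set (Sym2 V → Bool)}
    {F₁ F₂ : Set (Sym2 V)} (hE₁ : IsDeterminedBy E₁ F₁) (hE₂ : IsDeterminedBy E₂ F₂)
    (hF₁ : F₁.Finite) (hF₂ : F₂.Finite) (hd : Disjoint F₁ F₂) (hFG : F₁ ∪ F₂ ⊆ G.edgeSet) :
    P (E₁ ∩ E₂) = P E₁ * P E₂ := by
  have := hF₁.to_subtype
  have := hF₂.to_subtype
  rw [← hE₁.preimage_image_configOn, ← hE₂.preimage_image_configOn]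
  exact (hP.indepFun_configOn hF₁ hF₂ hd hFG).measure_inter_preimage_eq_mul _ _
    .of_discrete .of_discrete

theorem IsBernoulli.measure_edge_open (hP : IsBernoulli G p P) {e : Sym2 V}
    (he : e ∈ G.edgeSet) : P {ω | ω e = true} = ENNReal.ofReal p := by
  simpa using hP.2 {e} (by simpa using he) fun _ => true

end Independence

section Cluster

variable (G : SimpleGraph V)

def clusterIn (U : Set V) (ω : Sym2 V → Bool) (x : V) : Set V :=
  {y | (openIn G U ω).Reachable x y}

variable {G} {U U' : Set V} {ω : Sym2 V → Bool} {x : V}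

theorem cluster_eq_clusterIn_univ (ω : Sym2 V → Bool) (v : V) :
    cluster G ω v = clusterIn G Set.univ ω v := by
  have : openSG G ω = openIn G Set.univ ω := by
    ext a b
    simp [openSG, openIn]
  simp [cluster, clusterIn, this]

theorem openIn_mono (h : U ⊆ U') (ω : Sym2 V → Bool) : openIn G U ω ≤ openIn G U' ω :=
  fun _ _ hab => ⟨hab.1, h hab.2.1, h hab.2.2.1, hab.2.2.2⟩

theorem clusterIn_mono (h : U ⊆ U') : clusterIn G U ω x ⊆ clusterIn G U' ω x :=
  fun _ hy => hy.mono (openIn_mono h ω)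

theorem mem_clusterIn {y : V} : y ∈ clusterIn G U ω x ↔ (openIn G U ω).Reachable x y := Iff.rfl

theorem mem_clusterIn_self : x ∈ clusterIn G U ω x := SimpleGraph.Reachable.refl x

theorem clusterIn_subset (hx : x ∈ U) : clusterIn G U ω x ⊆ U := by
  intro y hy
  replace hy := (SimpleGraph.reachable_iff_reflTransGen _ _).1 hy
  induction hy with
  | refl => exact hx
  | tail _ hbc _ => exact hbc.2.2.1

theorem isDeterminedBy_clusterIn_eq (U A : Set V) (x : V) :
    IsDeterminedBy {ω | clusterIn G U ω x = A} ((G.edgeSet ∩ U.sym2) \ Aᶜ.sym2) := by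
  intro ω ω' hωω' hω
  refine SimpleGraph.setOf_reachable_eq_of_forall_adj_iff hω fun a ha b => ?_
  refine and_congr_right fun hab => and_congr_right fun haU => and_congr_right fun hbU => ?_
  rw [hωω' ⟨⟨hab, Set.mk_mem_sym2_iff.2 ⟨haU, hbU⟩⟩, fun h => (Set.mk_mem_sym2_iff.1 h).1 ha⟩]

theorem clusterIn_subset_union (hx : x ∈ U') :
    clusterIn G U ω x ⊆ clusterIn G U' ω x ∪
      ⋃ z ∈ {z | z ∈ U \ U' ∧ ∃ a ∈ clusterIn G U' ω x, (openIn G U ω).Adj a z},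
        clusterIn G (U \ clusterIn G U' ω x) ω z := by
  intro y hy
  replace hy := (SimpleGraph.reachable_iff_reflTransGen _ _).1 hy
  induction hy with
  | refl => exact .inl mem_clusterIn_self
  | @tail b c _ hbc ih =>
    rcases ih with hb | hb
    · by_cases hc : c ∈ U'
      · exact .inl ((mem_clusterIn.1 hb).trans
          (SimpleGraph.Adj.reachable ⟨hbc.1, clusterIn_subset hx hb, hc, hbc.2.2.2⟩))
      · exact .inr (Set.mem_biUnion ⟨⟨hbc.2.2.1, hc⟩, b, hb, hbc⟩ mem_clusterIn_self)
    · by_cases hc : c ∈ clusterIn G U' ω x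
      · exact .inl hc
      · obtain ⟨z, ⟨hzU, hzexit⟩, hbz⟩ := Set.mem_iUnion₂.1 hb
        have hz : z ∈ U \ clusterIn G U' ω x := ⟨hzU.1, fun h => hzU.2 (clusterIn_subset hx h)⟩
        have hbc' : (openIn G (U \ clusterIn G U' ω x) ω).Adj b c :=
          ⟨hbc.1, clusterIn_subset hz hbz, ⟨hbc.2.2.1, hc⟩, hbc.2.2.2⟩
        exact .inr (Set.mem_biUnion ⟨hzU, hzexit⟩ ((mem_clusterIn.1 hbz).trans hbc'.reachable))

end Cluster

section Exploration

variable (G : SimpleGraph V) (S : V → Set V)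

/-- `U` is the set of vertices not explored yet; removing each explored cluster from it is what
makes the successive stages depend on disjoint sets of edges. -/
def exitChain : ℕ → V → Set V → Set (Sym2 V → Bool)
  | 0, _, _ => Set.univ
  | n + 1, x, U =>
    {ω | ∃ a b, a ∈ clusterIn G (S x ∩ U) ω x ∧ b ∈ U \ S x ∧ G.Adj a b ∧ ω s(a, b) = true ∧
      ω ∈ exitChain n b (U \ clusterIn G (S x ∩ U) ω x)}

/-- Every edge inspected by `exitChain G S n x U` has both endpoints in this finite set. -/
def exitRegion : ℕ → V → Set V
  | 0, _ => ∅
  | n + 1, x => S x ∪ ⋃ a ∈ S x, ⋃ b ∈ G.neighborSet a, insert b (exitRegion n b)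

variable {G S}

theorem exitRegion_finite (hloc : ∀ v, (G.neighborSet v).Finite) (hS : ∀ x, (S x).Finite) :
    ∀ n x, (exitRegion G S n x).Finite
  | 0, _ => Set.finite_empty
  | n + 1, x => (hS x).union <| (hS x).biUnion fun a _ =>
      (hloc a).biUnion fun b _ => (exitRegion_finite hloc hS n b).insert b

theorem insert_exitRegion_subset {n : ℕ} {x a b : V} (ha : a ∈ S x) (hab : G.Adj a b) :
    insert b (exitRegion G S n b) ⊆ exitRegion G S (n + 1) x :=
  fun _ hv => .inr (Set.mem_biUnion ha (Set.mem_biUnion hab hv))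

theorem isDeterminedBy_exitChain (hS : ∀ x, x ∈ S x) :
    ∀ n {x U}, x ∈ U →
      IsDeterminedBy (exitChain G S n x U) (G.edgeSet ∩ (exitRegion G S n x ∩ U).sym2)
  | 0, _, _, _ => fun _ _ _ _ => Set.mem_univ _
  | n + 1, x, U, hx => by
    rintro ω ω' hωω' ⟨a, b, ha, hb, hab, hopen, hchain⟩
    have hxU : x ∈ S x ∩ U := ⟨hS x, hx⟩
    have hA : clusterIn G (S x ∩ U) ω x ⊆ S x ∩ U := clusterIn_subset hxU
    have hSx : S x ⊆ exitRegion G S (n + 1) x := Set.subset_union_left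
    have hb' := insert_exitRegion_subset (n := n) (hA ha).1 hab
    have hcl : clusterIn G (S x ∩ U) ω' x = clusterIn G (S x ∩ U) ω x :=
      isDeterminedBy_clusterIn_eq _ _ x (hωω'.mono (Set.sdiff_subset.trans
        (Set.inter_subset_inter_right _ (Set.sym2_mono (Set.inter_subset_inter_left U hSx))))) rfl
    refine ⟨a, b, hcl ▸ ha, hb, hab, ?_, hcl ▸ ?_⟩
    · rw [← hωω' ⟨hab, Set.mk_mem_sym2_iff.2 ⟨⟨hSx (hA ha).1, (hA ha).2⟩,
        ⟨hb' (Set.mem_insert b _), hb.1⟩⟩⟩]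
      exact hopen
    · have hbU : b ∈ U \ clusterIn G (S x ∩ U) ω x := ⟨hb.1, fun h => hb.2 (hA h).1⟩
      exact isDeterminedBy_exitChain hS n hbU (hωω'.mono (Set.inter_subset_inter_right _
        (Set.sym2_mono (Set.inter_subset_inter ((Set.subset_insert b _).trans hb')
          Set.sdiff_subset)))) hchain

theorem mem_exitChain_of_infinite (hloc : ∀ v, (G.neighborSet v).Finite)
    (hSfin : ∀ x, (S x).Finite) (hS : ∀ x, x ∈ S x) {ω : Sym2 V → Bool} :
    ∀ n {x U}, x ∈ U → (clusterIn G U ω x).Infinite → ω ∈ exitChain G S n x U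
  | 0, _, _, _, _ => Set.mem_univ _
  | n + 1, x, U, hx, hinf => by
    set A := clusterIn G (S x ∩ U) ω x
    have hxA : x ∈ S x ∩ U := ⟨hS x, hx⟩
    have hAfin : A.Finite :=
      (hSfin x).subset ((clusterIn_subset hxA).trans Set.inter_subset_left)
    set Z := {z | z ∈ U \ (S x ∩ U) ∧ ∃ a ∈ A, (openIn G U ω).Adj a z}
    have hZfin : Z.Finite := (hAfin.biUnion fun a _ => hloc a).subset
      fun z ⟨_, a, ha, haz⟩ => Set.mem_biUnion ha haz.1
    obtain ⟨z, ⟨hzU, a, ha, haz⟩, hzinf⟩ : ∃ z ∈ Z, (clusterIn G (U \ A) ω z).Infinite := by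
      by_contra! h
      exact hinf ((hAfin.union (hZfin.biUnion h)).subset (clusterIn_subset_union hxA))
    have hzS : z ∉ S x := fun h => hzU.2 ⟨h, hzU.1⟩
    exact ⟨a, z, ha, ⟨hzU.1, hzS⟩, haz.1, haz.2.2.2, mem_exitChain_of_infinite hloc hSfin hS n
      ⟨hzU.1, fun h => hzS (clusterIn_subset hxA h).1⟩ hzinf⟩

end Exploration

section Probability

variable {G : SimpleGraph V} {S : V → Set V} {p : ℝ} {P : Measure (Sym2 V → Bool)}

theorem IsBernoulli.measure_clusterIn_eq_inter_exitChain (hP : IsBernoulli G p P)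
    (hloc : ∀ v, (G.neighborSet v).Finite) (hSfin : ∀ x, (S x).Finite) (hS : ∀ x, x ∈ S x)
    {n : ℕ} {x a b : V} {U A : Set V} (hA : A ⊆ S x ∩ U) (ha : a ∈ A) (hab : G.Adj a b)
    (hb : b ∈ U \ S x) :
    P ({ω | clusterIn G (S x ∩ U) ω x = A} ∩
        ({ω | ω s(a, b) = true} ∩ exitChain G S n b (U \ A))) =
      P {ω | clusterIn G (S x ∩ U) ω x = A} *
        (ENNReal.ofReal p * P (exitChain G S n b (U \ A))) := by
  set Fcl := (G.edgeSet ∩ (S x ∩ U).sym2) \ Aᶜ.sym2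
  set Fchain := G.edgeSet ∩ (exitRegion G S n b ∩ (U \ A)).sym2
  have hFcl : Fcl.Finite := ((hSfin x).inter_of_left U).sym2.subset fun e he => he.1.2
  have hFchain : Fchain.Finite :=
    ((exitRegion_finite hloc hSfin n b).inter_of_left _).sym2.subset fun e he => he.2
  have hchain_out : Fchain ⊆ Aᶜ.sym2 := fun e he =>
    Set.sym2_mono (Set.inter_subset_right.trans fun v hv => hv.2) he.2
  have hedge : s(a, b) ∉ Fchain := fun h => (Set.mk_mem_sym2_iff.1 (hchain_out h)).1 ha
  have hbA : b ∈ U \ A := ⟨hb.1, fun h => hb.2 (hA h).1⟩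
  have hFG : Fcl ∪ ({s(a, b)} ∪ Fchain) ⊆ G.edgeSet := Set.union_subset
    (fun e he => he.1.1) (Set.union_subset (Set.singleton_subset_iff.2 hab) fun e he => he.1)
  rw [hP.measure_inter_eq_mul (isDeterminedBy_clusterIn_eq _ _ x)
      ((isDeterminedBy_edge _).inter (isDeterminedBy_exitChain hS n hbA)) hFcl
      ((Set.finite_singleton _).union hFchain) ?_ hFG,
    hP.measure_inter_eq_mul (isDeterminedBy_edge _) (isDeterminedBy_exitChain hS n hbA)
      (Set.finite_singleton _) hFchain (Set.disjoint_singleton_left.2 hedge)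
      (Set.subset_union_right.trans hFG),
    hP.measure_edge_open hab]
  refine Set.disjoint_union_right.2 ⟨Set.disjoint_singleton_right.2 fun h => ?_,
    Set.disjoint_of_subset_right hchain_out Set.disjoint_sdiff_left⟩
  exact hb.2 (Set.mk_mem_sym2_iff.1 h.1.2).2.1

theorem IsBernoulli.measure_exitStep_le (hP : IsBernoulli G p P)
    (hloc : ∀ v, (G.neighborSet v).Finite) (hSfin : ∀ x, (S x).Finite) (hS : ∀ x, x ∈ S x)
    {n : ℕ} {x a b : V} {U : Set V} (hx : x ∈ U) (hab : G.Adj a b) (hb : b ∉ S x) {K : ℝ≥0∞}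
    (hK : ∀ y U', y ∈ U' → P (exitChain G S n y U') ≤ K) :
    P {ω | a ∈ clusterIn G (S x ∩ U) ω x ∧ b ∈ U ∧ ω s(a, b) = true ∧
        ω ∈ exitChain G S n b (U \ clusterIn G (S x ∩ U) ω x)} ≤
      P {ω | (openIn G (S x) ω).Reachable x a} * (ENNReal.ofReal p * K) := by
  by_cases hbU : b ∈ U
  swap
  · simp [hbU]
  have hxU : x ∈ S x ∩ U := ⟨hS x, hx⟩
  let C : {A : Set V // A ⊆ S x ∩ U ∧ a ∈ A} → Set (Sym2 V → Bool) :=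
    fun A => {ω | clusterIn G (S x ∩ U) ω x = A}
  have : Finite {A : Set V // A ⊆ S x ∩ U ∧ a ∈ A} :=
    (((hSfin x).inter_of_left U).finite_subsets.subset fun _ hA => hA.1).to_subtype
  calc _ ≤ P (⋃ A, C A ∩ ({ω | ω s(a, b) = true} ∩ exitChain G S n b (U \ A.1))) := by
        refine measure_mono fun ω ⟨ha, _, hopen, hchain⟩ => Set.mem_iUnion.2 ?_
        exact ⟨⟨_, clusterIn_subset hxU, ha⟩, rfl, hopen, hchain⟩
    _ ≤ P (⋃ A, C A) * (ENNReal.ofReal p * K) := by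
        refine measure_iUnion_inter_le_mul (fun A => ?_) (fun A A' hne => ?_) fun A => ?_
        · exact (isDeterminedBy_clusterIn_eq _ _ x).measurableSet
            (((hSfin x).inter_of_left U).sym2.subset fun e he => he.1.2)
        · exact Set.disjoint_left.2 fun ω hA hA' => hne (Subtype.ext (hA.symm.trans hA'))
        · rw [hP.measure_clusterIn_eq_inter_exitChain hloc hSfin hS A.2.1 A.2.2 hab
            ⟨hbU, hb⟩]
          gcongr
          exact hK _ _ ⟨hbU, fun h => hb (A.2.1 h).1⟩
    _ ≤ _ := by
        gcongr
        refine Set.iUnion_subset fun A ω hω => ?_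
        exact clusterIn_mono Set.inter_subset_left (hω.symm ▸ A.2.2 : a ∈ _)

theorem finite_boundary (hloc : ∀ v, (G.neighborSet v).Finite) {T : Set V} (hT : T.Finite) :
    {d : V × V | G.Adj d.1 d.2 ∧ d.1 ∈ T ∧ d.2 ∉ T}.Finite :=
  (hT.biUnion fun a _ => (Set.finite_singleton a).prod (hloc a)).subset
    fun _ hd => Set.mem_biUnion hd.2.1 ⟨rfl, hd.1⟩

theorem IsBernoulli.measure_exitChain_le (hP : IsBernoulli G p P)
    (hloc : ∀ v, (G.neighborSet v).Finite) (hSfin : ∀ x, (S x).Finite) (hS : ∀ x, x ∈ S x)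
    {c : ℝ} (hphi : ∀ x, phi G P p x (S x) ≤ ENNReal.ofReal c) :
    ∀ n {x U}, x ∈ U → P (exitChain G S n x U) ≤ ENNReal.ofReal c ^ n
  | 0, _, _, _ => by
    have := hP.1
    simp [exitChain]
  | n + 1, x, U, hx => by
    have : Finite {d : V × V // G.Adj d.1 d.2 ∧ d.1 ∈ S x ∧ d.2 ∉ S x} :=
      (finite_boundary hloc (hSfin x)).to_subtype
    have hxU : x ∈ S x ∩ U := ⟨hS x, hx⟩
    calc P (exitChain G S (n + 1) x U)
      _ ≤ P (⋃ d : {d : V × V // G.Adj d.1 d.2 ∧ d.1 ∈ S x ∧ d.2 ∉ S x},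
            {ω | d.1.1 ∈ clusterIn G (S x ∩ U) ω x ∧ d.1.2 ∈ U ∧ ω s(d.1.1, d.1.2) = true ∧
              ω ∈ exitChain G S n d.1.2 (U \ clusterIn G (S x ∩ U) ω x)}) := by
          refine measure_mono fun ω ⟨a, b, ha, hb, hab, hopen, hchain⟩ => Set.mem_iUnion.2 ?_
          exact ⟨⟨(a, b), hab, (clusterIn_subset hxU ha).1, hb.2⟩, ha, hb.1, hopen, hchain⟩
      _ ≤ ∑' d : {d : V × V // G.Adj d.1 d.2 ∧ d.1 ∈ S x ∧ d.2 ∉ S x},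
            P {ω | (openIn G (S x) ω).Reachable x d.1.1} *
              (ENNReal.ofReal p * ENNReal.ofReal c ^ n) :=
          (measure_iUnion_le _).trans <| ENNReal.tsum_le_tsum fun d =>
            hP.measure_exitStep_le hloc hSfin hS hx d.2.1 d.2.2.2
              fun _ _ hy => hP.measure_exitChain_le hloc hSfin hS hphi n hy
      _ = phi G P p x (S x) * ENNReal.ofReal c ^ n := by
          rw [ENNReal.tsum_mul_right, phi]
          ring
      _ ≤ ENNReal.ofReal c ^ (n + 1) := by
          rw [pow_succ']
          gcongr
          exact hphi x

end Probability

theorem no_infinite_cluster_of_phi_witnesses_general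
    {V : Type*} (G : SimpleGraph V) (D : ℕ) (hD : DegLE G D)
    (p : ℝ) (c : ℝ) (hc : c < 1)
    (P : Measure (Sym2 V → Bool)) (hP : IsBernoulli G p P)
    (hwit : ∀ x : V, ∃ S : Set V, S.Finite ∧ (G.induce S).Connected ∧ x ∈ S ∧
      phi G P p x S ≤ ENNReal.ofReal c)
    (v : V) :
    P {ω | (cluster G ω v).Infinite} = 0 := by
  choose S hSfin _ hS hphi using hwit
  have hloc : ∀ u, (G.neighborSet u).Finite := fun u => Set.finite_of_encard_le_coe (hD u)
  have hinf_sub : ∀ n, {ω | (cluster G ω v).Infinite} ⊆ exitChain G S n v Set.univ :=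
    fun n ω hω => mem_exitChain_of_infinite hloc hSfin hS n (Set.mem_univ v)
      (cluster_eq_clusterIn_univ ω v ▸ hω)
  refine le_antisymm (ge_of_tendsto' (ENNReal.tendsto_pow_atTop_nhds_zero_of_lt_one
    (ENNReal.ofReal_lt_one.2 hc)) fun n => ?_) bot_le
  exact (measure_mono (hinf_sub n)).trans
    (hP.measure_exitChain_le hloc hSfin hS hphi n (Set.mem_univ v))

/-- If every vertex `x` of a graph with degrees bounded by `D` admits a finite
connected witness set `S_x ∋ x` with `φ_p^x(S_x) ≤ c < 1`, then Bernoulli(`p`) percolation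
almost surely has no infinite cluster. -/
theorem no_infinite_cluster_of_phi_witnesses
    {V : Type*} (G : SimpleGraph V) (D : ℕ) (hD : DegLE G D)
    (p : ℝ) (hp0 : 0 ≤ p) (hp1 : p ≤ 1) (c : ℝ) (hc : c < 1)
    (P : Measure (Sym2 V → Bool)) (hP : IsBernoulli G p P)
    (hwit : ∀ x : V, ∃ S : Set V, S.Finite ∧ (G.induce S).Connected ∧ x ∈ S ∧
      phi G P p x S ≤ ENNReal.ofReal c)
    (v : V) :
    P {ω | (cluster G ω v).Infinite} = 0 :=
  no_infinite_cluster_of_phi_witnesses_general G D hD p c hc P hP hwit v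

end PercolationPaper
end

section
/- Let G be a connected locally finite graph and let o be a vertex such that |B_G(o,r)|^{1/r} → 1 as r → ∞ (subexponential volume growth). Let p ∈ [0,1] and suppose there exist c < 1 and R ∈ ℕ such that φ_p^o(B_G(o,r)) ≤ c^r for every r ≥ R. Then the expected cluster size of o in Bernoulli(p) percolation on G is finite: E_p|C_o| < ∞. -/
open MeasureTheory ENNReal

/-!
Summing the indicator of `{o ↔ x}` over `x` gives `E|C_o| = ∑ₓ P(o ↔ x)`. An open path from `o`
to a vertex outside `B(o, r)` leaves the ball through a boundary edge `(u, w)` with `o ↔ u` inside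
the ball, so `p · P(o ↔ x) ≤ φ_p^o(B(o, r)) ≤ c ^ r` for `x ∉ B(o, r)`, `r ≥ R` (for `p = 0` the
cluster is almost surely `{o}`). Pick `1 < a` with `a c < 1`: for large `r` the vertices first met
at radius `r + 1` are at most `|B(o, r + 1)| ≤ a ^ (r + 1)` in number and each contributes at most
`c ^ r / p`, so the sum is dominated by a convergent geometric series in `a c`.
-/

section SubexponentialSums

variable {α : Type*} {B : ℕ → Set α} {f : α → ℝ≥0∞}

lemma le_indicator_add_tsum_indicator_of_tail_le (hB : Monotone B) (hcover : ∀ x, ∃ r, x ∈ B r)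
    (hf1 : ∀ x, f x ≤ 1) {g : ℕ → ℝ≥0∞} {N : ℕ} (htail : ∀ r ≥ N, ∀ x ∉ B r, f x ≤ g r)
    (x : α) :
    f x ≤ (B N).indicator 1 x + ∑' r, (B (N + r + 1)).indicator (fun _ => g (N + r)) x := by
  by_cases hxN : x ∈ B N
  · simpa [hxN] using (hf1 x).trans le_self_add
  obtain ⟨m, hm⟩ := hcover x
  obtain ⟨r, hr, hr1⟩ := Nat.exists_not_and_succ_of_not_zero_of_exists
    (p := fun k => x ∈ B (N + k)) (by simpa using hxN) ⟨m, hB (by omega) hm⟩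
  rw [← add_assoc] at hr1
  calc f x ≤ g (N + r) := htail _ (by omega) x hr
    _ = (B (N + r + 1)).indicator (fun _ => g (N + r)) x :=
        (Set.indicator_of_mem hr1 fun _ => g (N + r)).symm
    _ ≤ ∑' r, (B (N + r + 1)).indicator (fun _ => g (N + r)) x := ENNReal.le_tsum r
    _ ≤ _ := le_add_self

lemma ENNReal.exists_one_lt_mul_lt_one {c : ℝ≥0∞} (hc : c < 1) :
    ∃ a, 1 < a ∧ a ≠ ⊤ ∧ a * c < 1 := by
  obtain ⟨a, h1a, ha⟩ := exists_between (lt_min (ENNReal.one_lt_inv.2 hc) one_lt_two)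
  refine ⟨a, h1a, ne_top_of_lt (ha.trans_le (min_le_right _ _)), ENNReal.mul_lt_of_lt_div ?_⟩
  rw [one_div]
  exact ha.trans_le (min_le_left _ _)

theorem tsum_ne_top_of_subexp_growth_of_tail_le_pow (hB : Monotone B)
    (hcover : ∀ x, ∃ r, x ∈ B r)
    (hgrowth : ∀ a : ℝ≥0∞, 1 < a → ∃ R, ∀ r ≥ R, ((B r).encard : ℝ≥0∞) ≤ a ^ r)
    (hf1 : ∀ x, f x ≤ 1) {K c : ℝ≥0∞} (hK : K ≠ ⊤) (hc : c < 1) {R : ℕ}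
    (htail : ∀ r ≥ R, ∀ x ∉ B r, f x ≤ K * c ^ r) :
    ∑' x, f x ≠ ⊤ := by
  obtain ⟨a, ha1, ha, hac⟩ := ENNReal.exists_one_lt_mul_lt_one hc
  obtain ⟨R₁, hR₁⟩ := hgrowth a ha1
  set N := max R R₁
  have hshell (r : ℕ) :
      ∑' x, (B (N + r + 1)).indicator (fun _ => K * c ^ (N + r)) x ≤ K * a * (a * c) ^ r :=
    calc ∑' x, (B (N + r + 1)).indicator (fun _ => K * c ^ (N + r)) x
        = (B (N + r + 1)).encard * (K * c ^ (N + r)) := by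
          rw [← tsum_subtype, ENNReal.tsum_set_const]
      _ ≤ a ^ (N + r + 1) * (K * c ^ (N + r)) := by gcongr; exact hR₁ _ (by omega)
      _ = K * a * (a * c) ^ (N + r) := by ring
      _ ≤ K * a * (a * c) ^ r := by
          gcongr K * a * ?_
          exact pow_le_pow_of_le_one zero_le hac.le (Nat.le_add_left r N)
  have hsum : ∑' x, f x ≤ a ^ N + ∑' r : ℕ, K * a * (a * c) ^ r :=
    calc ∑' x, f x
        ≤ ∑' x, ((B N).indicator 1 x +
            ∑' r, (B (N + r + 1)).indicator (fun _ => K * c ^ (N + r)) x) :=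
          ENNReal.tsum_le_tsum <| le_indicator_add_tsum_indicator_of_tail_le hB hcover hf1
            fun r hr => htail r (le_of_max_le_left hr)
      _ = (B N).encard + ∑' r, ∑' x, (B (N + r + 1)).indicator (fun _ => K * c ^ (N + r)) x := by
          rw [ENNReal.tsum_add, ENNReal.tsum_comm, ← tsum_subtype, Pi.one_def,
            ENNReal.tsum_set_one]
      _ ≤ a ^ N + ∑' r : ℕ, K * a * (a * c) ^ r :=
          add_le_add (hR₁ N (le_max_right _ _)) (ENNReal.tsum_le_tsum hshell)
  refine ne_top_of_le_ne_top ?_ hsum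
  rw [ENNReal.tsum_mul_left, ENNReal.tsum_geometric]
  exact ENNReal.add_ne_top.2 ⟨ENNReal.pow_ne_top ha, ENNReal.mul_ne_top (ENNReal.mul_ne_top hK ha)
    (ENNReal.inv_ne_top.2 (tsub_pos_of_lt hac).ne')⟩

lemma encard_le_pow_of_ncard_le_pow (hfin : ∀ r, (B r).Finite)
    (hgrowth : ∀ a : ℝ, 1 < a → ∃ R : ℕ, ∀ r ≥ R, ((B r).ncard : ℝ) ≤ a ^ r)
    (a : ℝ≥0∞) (ha : 1 < a) : ∃ R, ∀ r ≥ R, ((B r).encard : ℝ≥0∞) ≤ a ^ r := by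
  obtain ⟨b, hb0, h1b, hba⟩ := ENNReal.lt_iff_exists_real_btwn.1 ha
  obtain ⟨R, hR⟩ := hgrowth b (ENNReal.one_lt_ofReal.1 h1b)
  refine ⟨R, fun r hr => ?_⟩
  calc ((B r).encard : ℝ≥0∞) = ENNReal.ofReal ((B r).ncard : ℝ) := by
        rw [← (hfin r).cast_ncard_eq, ENNReal.ofReal_natCast, ENat.toENNReal_coe]
    _ ≤ ENNReal.ofReal (b ^ r) := ENNReal.ofReal_le_ofReal (hR r hr)
    _ = ENNReal.ofReal b ^ r := ENNReal.ofReal_pow hb0 r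
    _ ≤ a ^ r := pow_le_pow_left' hba.le r

lemma exists_tail_le_pow_of_tail_le_ofReal_pow (hB : Monotone B) {K : ℝ≥0∞}
    {c : ℝ} (hc : c < 1) {R : ℕ}
    (htail : ∀ r ≥ R, ∀ x ∉ B r, f x ≤ K * ENNReal.ofReal (c ^ r)) :
    ∃ c' < 1, ∃ R', ∀ r ≥ R', ∀ x ∉ B r, f x ≤ K * c' ^ r := by
  rcases le_or_gt 0 c with hc0 | hc0
  · refine ⟨ENNReal.ofReal c, ENNReal.ofReal_lt_one.2 hc, R, fun r hr x hx => ?_⟩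
    rw [← ENNReal.ofReal_pow hc0]
    exact htail r hr x hx
  -- a negative `c` gives the bound `0` at the odd radius `2R + 1`, hence at every larger radius
  · refine ⟨0, zero_lt_one, 2 * R + 1, fun r hr x hx => ?_⟩
    have hodd : c ^ (2 * R + 1) < 0 := Odd.pow_neg ⟨R, rfl⟩ hc0
    calc f x ≤ K * ENNReal.ofReal (c ^ (2 * R + 1)) :=
          htail _ (by omega) x fun hx' => hx (hB hr hx')
      _ = 0 := by rw [ENNReal.ofReal_of_nonpos hodd.le, mul_zero]
      _ ≤ K * 0 ^ r := zero_le

end SubexponentialSums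

namespace PercolationPaper

open SimpleGraph

variable {V : Type*} {G : SimpleGraph V}

lemma mem_gball_self (o : V) (r : ℕ) : o ∈ gball G o r := ⟨.nil, Nat.zero_le r⟩

lemma monotone_gball (o : V) : Monotone (gball G o) :=
  fun _ _ hmn _ ⟨w, hw⟩ => ⟨w, hw.trans hmn⟩

lemma exists_mem_gball (hG : G.Preconnected) (o x : V) : ∃ r, x ∈ gball G o r :=
  let ⟨w⟩ := hG o x
  ⟨w.length, w, le_rfl⟩

lemma countable_of_preconnected_of_finite_gball (hG : G.Preconnected) {o : V}
    (hfin : ∀ r, (gball G o r).Finite) : Countable V := by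
  rw [← Set.countable_univ_iff]
  refine (Set.countable_iUnion fun r => (hfin r).countable).mono fun x _ => ?_
  exact Set.mem_iUnion.2 (exists_mem_gball hG o x)

lemma reachable_openSG_iff {ω : Sym2 V → Bool} {u v : V} :
    (openSG G ω).Reachable u v ↔ ∃ w : G.Walk u v, ∀ e ∈ w.edges, ω e = true := by
  constructor
  · rintro ⟨w⟩
    induction w with
    | nil => exact ⟨.nil, by simp⟩
    | cons h _ ih =>
      obtain ⟨w', hw'⟩ := ih
      refine ⟨.cons h.1 w', fun e he => ?_⟩
      rcases List.mem_cons.1 (Walk.edges_cons h.1 w' ▸ he) with rfl | he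
      · exact h.2
      · exact hw' e he
  · rintro ⟨w, hw⟩
    refine ⟨w.transfer (openSG G ω) fun e he => ?_⟩
    induction e with
    | h a b => exact ⟨w.edges_subset_edgeSet he, hw _ he⟩

lemma measurableSet_reachable_openSG [Countable V] (u v : V) :
    MeasurableSet {ω : Sym2 V → Bool | (openSG G ω).Reachable u v} := by
  have : Countable (G.Walk u v) := Function.Injective.countable fun _ _ => Walk.ext_support
  simp only [reachable_openSG_iff, Set.ofPred_exists, Set.ofPred_forall]
  exact .iUnion fun w => .biInter w.edges.finite_toSet.countable
    fun e _ => measurableSet_eq_fun (measurable_pi_apply e) measurable_const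

lemma expCluster_eq_tsum [Countable V] (P : Measure (Sym2 V → Bool)) (o : V) :
    expCluster G P o = ∑' x, P {ω | (openSG G ω).Reachable o x} := by
  have hmeas := fun x => measurableSet_reachable_openSG (G := G) o x
  calc expCluster G P o
      = ∫⁻ ω, ∑' x, {ω | (openSG G ω).Reachable o x}.indicator 1 ω ∂P := by
        refine lintegral_congr fun ω => ?_
        rw [← ENNReal.tsum_set_one]
        exact tsum_subtype (cluster G ω o) 1
    _ = ∑' x, ∫⁻ ω, {ω | (openSG G ω).Reachable o x}.indicator 1 ω ∂P :=
        lintegral_tsum fun x => (measurable_one.indicator (hmeas x)).aemeasurable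
    _ = _ := tsum_congr fun x => lintegral_indicator_one (hmeas x)

lemma exists_boundary_reachable_openIn {ω : Sym2 V → Bool} {S : Set V} {o y z : V}
    (w : (openSG G ω).Walk y z) (hy : y ∈ S) (hz : z ∉ S) (hoy : (openIn G S ω).Reachable o y) :
    ∃ d : {d : V × V // G.Adj d.1 d.2 ∧ d.1 ∈ S ∧ d.2 ∉ S},
      (openIn G S ω).Reachable o d.1.1 := by
  induction w with
  | nil => exact absurd hy hz
  | @cons a b _ h _ ih =>
    by_cases hb : b ∈ S
    · exact ih hb hz (hoy.trans (Adj.reachable ⟨h.1, hy, hb, h.2⟩))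
    · exact ⟨⟨(a, b), h.1, hy, hb⟩, hoy⟩

lemma ofReal_mul_measure_reachable_le_phi [Countable V] (P : Measure (Sym2 V → Bool)) (p : ℝ)
    {S : Set V} {o x : V} (ho : o ∈ S) (hx : x ∉ S) :
    ENNReal.ofReal p * P {ω | (openSG G ω).Reachable o x} ≤ phi G P p o S := by
  refine mul_le_mul_right ((measure_mono ?_).trans (measure_iUnion_le _)) _
  rintro ω ⟨w⟩
  exact Set.mem_iUnion.2 (exists_boundary_reachable_openIn w ho hx .rfl)

lemma measure_reachable_eq_zero_of_ofReal_eq_zero [Countable V] {p : ℝ}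
    {P : Measure (Sym2 V → Bool)} (hP : IsBernoulli G p P) (hp : ENNReal.ofReal p = 0)
    {o x : V} (hxo : x ≠ o) : P {ω | (openSG G ω).Reachable o x} = 0 := by
  have hclosed (e : G.edgeSet) : P {ω | ω e = true} = 0 := by
    simpa [hp] using hP.2 {e.1} (by simp) fun _ => true
  refine measure_mono_null (fun ω ⟨w⟩ => ?_) (measure_iUnion_null hclosed)
  cases w with
  | nil => exact absurd rfl hxo
  | cons h _ => exact Set.mem_iUnion.2 ⟨⟨_, h.1⟩, h.2⟩

lemma exists_measure_reachable_le_of_phi_le [Countable V] {p c : ℝ}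
    {P : Measure (Sym2 V → Bool)} {o : V} {R : ℕ} (hP : IsBernoulli G p P)
    (hphi : ∀ r ≥ R, phi G P p o (gball G o r) ≤ ENNReal.ofReal (c ^ r)) :
    ∃ K ≠ ⊤, ∀ r ≥ R, ∀ x ∉ gball G o r,
      P {ω | (openSG G ω).Reachable o x} ≤ K * ENNReal.ofReal (c ^ r) := by
  by_cases hp : ENNReal.ofReal p = 0
  · refine ⟨0, zero_ne_top, fun r _ x hx => ?_⟩
    rw [measure_reachable_eq_zero_of_ofReal_eq_zero hP hp
      (ne_of_mem_of_not_mem (mem_gball_self o r) hx).symm]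
    exact zero_le
  · refine ⟨(ENNReal.ofReal p)⁻¹, ENNReal.inv_ne_top.2 hp, fun r hr x hx => ?_⟩
    calc P {ω | (openSG G ω).Reachable o x}
        = (ENNReal.ofReal p)⁻¹ * (ENNReal.ofReal p * P {ω | (openSG G ω).Reachable o x}) :=
          (ENNReal.inv_mul_cancel_left hp ofReal_ne_top).symm
      _ ≤ (ENNReal.ofReal p)⁻¹ * ENNReal.ofReal (c ^ r) := by
          gcongr
          exact (ofReal_mul_measure_reachable_le_phi P p (mem_gball_self o r) hx).trans (hphi r hr)

theorem expCluster_lt_top_of_subexp_growth_and_phi_decay_general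
    {V : Type*} (G : SimpleGraph V) (hconn : G.Connected)
    (o : V)
    (hballfin : ∀ r : ℕ, (gball G o r).Finite)
    (hgrowth : ∀ a : ℝ, 1 < a → ∃ R : ℕ, ∀ r : ℕ, R ≤ r →
      ((gball G o r).ncard : ℝ) ≤ a ^ r)
    (p : ℝ)
    (c : ℝ) (hc : c < 1) (R : ℕ)
    (P : Measure (Sym2 V → Bool)) (hP : IsBernoulli G p P)
    (hphi : ∀ r : ℕ, R ≤ r → phi G P p o (gball G o r) ≤ ENNReal.ofReal (c ^ r)) :
    expCluster G P o < ⊤ := by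
  have := countable_of_preconnected_of_finite_gball hconn.preconnected hballfin
  have := hP.1
  obtain ⟨K, hK, htail⟩ := exists_measure_reachable_le_of_phi_le hP hphi
  obtain ⟨c', hc', R', htail'⟩ :=
    exists_tail_le_pow_of_tail_le_ofReal_pow (monotone_gball o) hc htail
  rw [expCluster_eq_tsum, lt_top_iff_ne_top]
  exact tsum_ne_top_of_subexp_growth_of_tail_le_pow (monotone_gball o)
    (exists_mem_gball hconn.preconnected o) (encard_le_pow_of_ncard_le_pow hballfin hgrowth)
    (fun _ => prob_le_one) hK hc' htail'

/-- subexponential volume growth plus exponential decay of `φ_p` on balls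
implies finite expected cluster size. -/
theorem expCluster_lt_top_of_subexp_growth_and_phi_decay
    {V : Type*} (G : SimpleGraph V) (hconn : G.Connected)
    (hlf : ∀ v : V, (G.neighborSet v).Finite) (o : V)
    (hballfin : ∀ r : ℕ, (gball G o r).Finite)
    (hgrowth : ∀ a : ℝ, 1 < a → ∃ R : ℕ, ∀ r : ℕ, R ≤ r →
      ((gball G o r).ncard : ℝ) ≤ a ^ r)
    (p : ℝ) (hp0 : 0 ≤ p) (hp1 : p ≤ 1)
    (c : ℝ) (hc : c < 1) (R : ℕ)
    (P : Measure (Sym2 V → Bool)) (hP : IsBernoulli G p P)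
    (hphi : ∀ r : ℕ, R ≤ r → phi G P p o (gball G o r) ≤ ENNReal.ofReal (c ^ r)) :
    expCluster G P o < ⊤ :=
  expCluster_lt_top_of_subexp_growth_and_phi_decay_general G hconn o hballfin hgrowth p c hc R P hP
    hphi

end PercolationPaper
end

section
/- Let G be a locally finite graph, let r ∈ ℕ, p ∈ (0,1), and c < 1. Suppose that for every vertex x of G the subgraph induced on the ball B_G(x, r+1) is a tree, and that |B_G(x, r+1)| · p^{r+1} ≤ c for every vertex x. Then Bernoulli(p) bond percolation on G almost surely has no infinite cluster. -/
open MeasureTheory ENNReal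

namespace PercolationPaper

variable {V : Type*}

/-! An infinite open cluster of `v` contains, for every `n`, an open self-avoiding path of
length `n` from `v`. Cutting such a path into blocks of `r + 1` steps, each block is the
unique path in the tree `B(x, r + 1)` from its first vertex `x` to its last one, so it is
determined by its last vertex: there are at most `B ^ k` paths of length `k (r + 1)`, where
`B` bounds the ball sizes. Hence `P(|C_v| = ∞) ≤ (B p ^ (r + 1)) ^ k ≤ c ^ k → 0`. -/

section Paths

open SimpleGraph

variable {G : SimpleGraph V}

lemma gball_zero (v : V) : gball G v 0 = {v} := by
  ext x
  refine ⟨fun ⟨w, hw⟩ => (Walk.eq_of_length_eq_zero (Nat.le_zero.mp hw)).symm, ?_⟩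
  rintro rfl
  exact ⟨Walk.nil, le_rfl⟩

lemma gball_succ_subset (v : V) (n : ℕ) :
    gball G v (n + 1) ⊆ insert v (⋃ y ∈ G.neighborSet v, gball G y n) := by
  rintro x ⟨w, hw⟩
  cases w with
  | nil => exact Set.mem_insert _ _
  | cons h w =>
    rw [Walk.length_cons] at hw
    exact Or.inr (Set.mem_biUnion h ⟨w, by omega⟩)

lemma finite_gball (hlf : ∀ v : V, (G.neighborSet v).Finite) :
    ∀ (n : ℕ) (v : V), (gball G v n).Finite
  | 0, v => by simp [gball_zero]
  | n + 1, v =>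
    (((hlf v).biUnion fun y _ => finite_gball hlf n y).insert v).subset (gball_succ_subset v n)

lemma getVert_mem_gball {u w : V} (q : G.Walk u w) {i n : ℕ} (h : i ≤ n) :
    q.getVert i ∈ gball G u n :=
  ⟨q.take i, by rw [Walk.take_length]; omega⟩

lemma support_subset_gball {u w : V} (q : G.Walk u w) {n : ℕ} (h : q.length ≤ n) :
    ∀ y ∈ q.support, y ∈ gball G u n := by
  intro y hy
  obtain ⟨i, rfl, hi⟩ := Walk.mem_support_iff_exists_getVert.mp hy
  exact getVert_mem_gball q (hi.trans h)

lemma eq_of_isPath_of_length_le {r : ℕ} {x y : V} (hT : (G.induce (gball G x r)).IsAcyclic)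
    {q q' : G.Walk x y} (hq : q.IsPath) (hq' : q'.IsPath) (hqr : q.length ≤ r)
    (hqr' : q'.length ≤ r) : q = q' := by
  have induce_isPath : ∀ {w : G.Walk x y} (hw : w.IsPath) (hs : ∀ z ∈ w.support, z ∈ gball G x r),
      (w.induce _ hs).IsPath := fun hw hs =>
    (Walk.isPath_map_iff_of_injective (Embedding.induce (G := G) _).injective).mp
      (by rwa [Walk.map_induce])
  have hs := support_subset_gball q hqr
  have hs' := support_subset_gball q' hqr'
  have huniq := (hT.subsingleton_path _ _).elim ⟨_, induce_isPath hq hs⟩ ⟨_, induce_isPath hq' hs'⟩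
  rw [← q.map_induce hs, ← q'.map_induce hs']
  exact congrArg (Walk.map _) (congrArg Subtype.val huniq)

lemma eq_of_getVert_eq_of_length_le {r m : ℕ} (hT : ∀ y, (G.induce (gball G y r)).IsAcyclic)
    {v x : V} {q q' : G.Walk v x} (hq : q.IsPath) (hq' : q'.IsPath) (hqm : q.length ≤ m + r)
    (hqm' : q'.length ≤ m + r) (hpre : ∀ i ≤ m, q.getVert i = q'.getVert i) : q = q' := by
  have hm := hpre m le_rfl
  have hdrop : q.drop m = (q'.drop m).copy hm.symm rfl :=
    eq_of_isPath_of_length_le (hT _) (hq.drop m) (by simpa using hq'.drop m)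
      (by simp only [Walk.drop_length]; omega)
      (by simp only [Walk.length_copy, Walk.drop_length]; omega)
  refine Walk.ext_getVert fun i => ?_
  rcases le_or_gt i m with hi | hi
  · exact hpre i hi
  · obtain ⟨j, rfl⟩ := Nat.exists_eq_add_of_le hi.le
    rw [← Walk.drop_getVert, hdrop, Walk.getVert_copy, Walk.drop_getVert]

def pathsFrom (G : SimpleGraph V) (v : V) (n : ℕ) : Set (Σ x : V, G.Walk v x) :=
  {q | q.2.IsPath ∧ q.2.length = n}

lemma pathsFrom_zero (v : V) : pathsFrom G v 0 = {⟨v, Walk.nil⟩} := by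
  ext ⟨x, w⟩
  refine ⟨fun ⟨_, hw⟩ => ?_, ?_⟩
  · cases w with
    | nil => rfl
    | cons _ _ => simp at hw
  · rintro ⟨⟩
    exact ⟨Walk.IsPath.nil, rfl⟩

lemma finite_pathsFrom (hlf : ∀ v : V, (G.neighborSet v).Finite) (v : V) (n : ℕ) :
    (pathsFrom G v n).Finite := by
  classical
  let _ : G.LocallyFinite := fun y => (hlf y).fintype
  refine ((finite_gball hlf n v).biUnion fun x _ =>
    (Set.toFinite {w : G.Walk v x | w.length = n}).image (Sigma.mk x)).subset ?_
  rintro ⟨x, w⟩ ⟨-, hw⟩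
  exact Set.mem_biUnion ⟨w, hw.le⟩ ⟨w, hw, rfl⟩

/-- A path of length `m + (r + 1)` is determined by its first `m` steps and its endpoint, which
lies in the ball of radius `r + 1` around the `m`-th vertex. -/
lemma ncard_pathsFrom_add_le (hlf : ∀ v : V, (G.neighborSet v).Finite) {r B : ℕ}
    (hT : ∀ y, (G.induce (gball G y (r + 1))).IsAcyclic)
    (hB : ∀ y, (gball G y (r + 1)).ncard ≤ B) (v : V) (m : ℕ) :
    (pathsFrom G v (m + (r + 1))).ncard ≤ B * (pathsFrom G v m).ncard := by
  classical
  have hS := finite_pathsFrom hlf v (m + (r + 1))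
  have hS' := finite_pathsFrom hlf v m
  let pre : (Σ x : V, G.Walk v x) → Σ x : V, G.Walk v x := fun q => ⟨_, q.2.take m⟩
  rw [Set.ncard_eq_toFinset_card _ hS, Set.ncard_eq_toFinset_card _ hS']
  refine Finset.card_le_mul_card_image_of_maps_to (f := pre) ?_ B fun b _ => ?_
  · intro q hq
    rw [Set.Finite.mem_toFinset] at hq ⊢
    exact ⟨hq.1.take m, by rw [Walk.take_length, hq.2]; omega⟩
  have hball := finite_gball hlf (r + 1) b.1
  refine (Finset.card_le_card_of_injOn Sigma.fst (t := hball.toFinset) ?_ ?_).trans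
    ((Set.ncard_eq_toFinset_card _ hball).symm.trans_le (hB b.1))
  · rintro ⟨x, w⟩ hq
    simp only [Finset.coe_filter, Finset.mem_coe, Set.Finite.mem_toFinset, Set.mem_ofPred_eq]
      at hq ⊢
    obtain ⟨⟨-, hw⟩, rfl⟩ := hq
    exact ⟨w.drop m, by rw [Walk.drop_length]; dsimp only at hw; omega⟩
  · rintro ⟨x, w⟩ hq ⟨x', w'⟩ hq' (rfl : x = x')
    simp only [Finset.coe_filter, Set.Finite.mem_toFinset, Set.mem_ofPred_eq] at hq hq'
    obtain ⟨⟨hw, hwl⟩, hwb⟩ := hq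
    obtain ⟨⟨hw', hwl'⟩, hwb'⟩ := hq'
    refine congrArg _ (eq_of_getVert_eq_of_length_le hT hw hw' hwl.le hwl'.le fun i hi => ?_)
    have := congrArg (fun t : Σ x : V, G.Walk v x => t.2.getVert i) (hwb.trans hwb'.symm)
    simpa [pre, Walk.take_getVert, min_eq_right hi] using this

lemma ncard_pathsFrom_mul_le (hlf : ∀ v : V, (G.neighborSet v).Finite) {r B : ℕ}
    (hT : ∀ y, (G.induce (gball G y (r + 1))).IsAcyclic)
    (hB : ∀ y, (gball G y (r + 1)).ncard ≤ B) (v : V) :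
    ∀ k : ℕ, (pathsFrom G v (k * (r + 1))).ncard ≤ B ^ k
  | 0 => by simp [pathsFrom_zero]
  | k + 1 =>
    calc (pathsFrom G v ((k + 1) * (r + 1))).ncard
        ≤ B * (pathsFrom G v (k * (r + 1))).ncard := by
          rw [Nat.succ_mul]; exact ncard_pathsFrom_add_le hlf hT hB v _
      _ ≤ B ^ (k + 1) := by
          rw [pow_succ']; exact Nat.mul_le_mul_left B (ncard_pathsFrom_mul_le hlf hT hB v k)

end Paths

section Percolation

open SimpleGraph

variable {G : SimpleGraph V}

lemma measure_edges_open {p : ℝ} {P : Measure (Sym2 V → Bool)} (hP : IsBernoulli G p P)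
    {a b : V} {w : G.Walk a b} (hw : w.IsPath) :
    P {ω | ∀ e ∈ w.edges, ω e = true} = ENNReal.ofReal p ^ w.length := by
  classical
  have hsub : ↑w.edges.toFinset ⊆ G.edgeSet := fun e he =>
    w.edges_subset_edgeSet (List.mem_toFinset.mp he)
  have hset : {ω : Sym2 V → Bool | ∀ e ∈ w.edges, ω e = true}
      = {ω | ∀ e ∈ w.edges.toFinset, ω e = (fun _ => true) e} := by
    simp only [List.mem_toFinset]
  rw [hset, hP.2 _ hsub, Finset.prod_const, if_pos rfl,
    List.toFinset_card_of_nodup hw.edges_nodup, Walk.length_edges]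

lemma openSG_le (ω : Sym2 V → Bool) : openSG G ω ≤ G := fun _ _ h => h.1

lemma edges_open {ω : Sym2 V → Bool} {a b : V} (w : (openSG G ω).Walk a b) :
    ∀ e ∈ w.edges, ω e = true := by
  intro e he
  induction e using Sym2.ind with
  | _ x y => exact (w.adj_of_mem_edges he).2

lemma setOf_cluster_infinite_subset (hlf : ∀ v : V, (G.neighborSet v).Finite) (v : V) (n : ℕ) :
    {ω | (cluster G ω v).Infinite} ⊆
      ⋃ q ∈ pathsFrom G v n, {ω | ∀ e ∈ q.2.edges, ω e = true} := by
  classical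
  intro ω hω
  obtain ⟨x, ⟨w⟩, hx⟩ := (Set.Infinite.sdiff hω (finite_gball hlf n v)).nonempty
  set q := w.bypass.mapLe (openSG_le ω)
  have hq : q.IsPath := (Walk.isPath_mapLe _).mpr w.bypass_isPath
  have hn : n ≤ q.length := by
    by_contra h
    exact hx ⟨q, by omega⟩
  refine Set.mem_biUnion (x := ⟨_, q.take n⟩) ⟨hq.take n, by rw [Walk.take_length]; omega⟩
    fun e he => edges_open w.bypass e ?_
  rw [← Walk.edges_mapLe_eq_edges (openSG_le ω)]
  exact (Walk.isSubwalk_take _ _).edges_subset he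

lemma measure_cluster_infinite_le (hlf : ∀ v : V, (G.neighborSet v).Finite) {p : ℝ}
    {P : Measure (Sym2 V → Bool)} (hP : IsBernoulli G p P) (v : V) (n : ℕ) :
    P {ω | (cluster G ω v).Infinite} ≤ (pathsFrom G v n).ncard * ENNReal.ofReal p ^ n := by
  have hS := finite_pathsFrom hlf v n
  calc P {ω | (cluster G ω v).Infinite}
      ≤ P (⋃ q ∈ hS.toFinset, {ω | ∀ e ∈ q.2.edges, ω e = true}) :=
        measure_mono (by simpa using setOf_cluster_infinite_subset hlf v n)
    _ ≤ ∑ q ∈ hS.toFinset, P {ω | ∀ e ∈ q.2.edges, ω e = true} := measure_biUnion_finset_le _ _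
    _ = ∑ _q ∈ hS.toFinset, ENNReal.ofReal p ^ n := Finset.sum_congr rfl fun q hq => by
        rw [Set.Finite.mem_toFinset] at hq
        rw [measure_edges_open hP hq.1, hq.2]
    _ = _ := by rw [Finset.sum_const, nsmul_eq_mul, Set.ncard_eq_toFinset_card _ hS]

end Percolation

lemma exists_nat_bound_of_mul_le {ι : Type*} {a : ι → ℕ} {t c : ℝ} (ht : 0 < t) (hc : 0 ≤ c)
    (h : ∀ i, a i * t ≤ c) : ∃ B : ℕ, (∀ i, a i ≤ B) ∧ B * t ≤ c :=
  ⟨⌊c / t⌋₊, fun i => Nat.le_floor ((le_div_iff₀ ht).mpr (h i)),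
    (le_div_iff₀ ht).mp (Nat.floor_le (div_nonneg hc ht.le))⟩

theorem no_infinite_cluster_of_treelike_small_balls_general
    {V : Type*} (G : SimpleGraph V) (hlf : ∀ v : V, (G.neighborSet v).Finite)
    (r : ℕ) (p : ℝ) (hp0 : 0 < p) (c : ℝ) (hc : c < 1)
    (htree : ∀ x : V, (G.induce (gball G x (r + 1))).IsTree)
    (hvol : ∀ x : V, ((gball G x (r + 1)).ncard : ℝ) * p ^ (r + 1) ≤ c)
    (P : Measure (Sym2 V → Bool)) (hP : IsBernoulli G p P) (v : V) :
    P {ω | (cluster G ω v).Infinite} = 0 := by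
  have hc0 : 0 ≤ c := le_trans (by positivity) (hvol v)
  obtain ⟨B, hB, hBc⟩ := exists_nat_bound_of_mul_le (pow_pos hp0 (r + 1)) hc0 hvol
  have hBc' : (B : ℝ≥0∞) * ENNReal.ofReal p ^ (r + 1) ≤ ENNReal.ofReal c := by
    rw [← ENNReal.ofReal_natCast, ← ENNReal.ofReal_pow hp0.le,
      ← ENNReal.ofReal_mul (Nat.cast_nonneg B)]
    exact ENNReal.ofReal_le_ofReal hBc
  have hk (k : ℕ) : P {ω | (cluster G ω v).Infinite} ≤ ENNReal.ofReal c ^ k :=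
    calc P {ω | (cluster G ω v).Infinite}
        ≤ (pathsFrom G v (k * (r + 1))).ncard * ENNReal.ofReal p ^ (k * (r + 1)) :=
          measure_cluster_infinite_le hlf hP v _
      _ ≤ (B : ℝ≥0∞) ^ k * ENNReal.ofReal p ^ (k * (r + 1)) := by
          gcongr
          exact_mod_cast ncard_pathsFrom_mul_le hlf (fun x => (htree x).isAcyclic) hB v k
      _ = ((B : ℝ≥0∞) * ENNReal.ofReal p ^ (r + 1)) ^ k := by rw [mul_pow, ← pow_mul, mul_comm k]
      _ ≤ ENNReal.ofReal c ^ k := by gcongr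
  exact le_antisymm (ge_of_tendsto'
    (ENNReal.tendsto_pow_atTop_nhds_zero_of_lt_one (ENNReal.ofReal_lt_one.mpr hc)) hk) bot_le

/-- if all balls of radius `r+1` induce trees and `|B(x,r+1)|·p^{r+1} ≤ c < 1`
for every vertex `x`, then Bernoulli(`p`) percolation a.s. has no infinite cluster. -/
theorem no_infinite_cluster_of_treelike_small_balls
    {V : Type*} (G : SimpleGraph V) (hlf : ∀ v : V, (G.neighborSet v).Finite)
    (r : ℕ) (p : ℝ) (hp0 : 0 < p) (hp1 : p < 1) (c : ℝ) (hc : c < 1)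
    (hfin : ∀ x : V, (gball G x (r + 1)).Finite)
    (htree : ∀ x : V, (G.induce (gball G x (r + 1))).IsTree)
    (hvol : ∀ x : V, ((gball G x (r + 1)).ncard : ℝ) * p ^ (r + 1) ≤ c)
    (P : Measure (Sym2 V → Bool)) (hP : IsBernoulli G p P) (v : V) :
    P {ω | (cluster G ω v).Infinite} = 0 :=
  no_infinite_cluster_of_treelike_small_balls_general G hlf r p hp0 c hc htree hvol P hP v

end PercolationPaper
end

section
/- Let f : [0,1] → [0,1] be continuous and strictly convex with f(1) = 1, and for each n let f_n : [0,1] → [0,1] be continuous with f_n(1) = 1. Let q be the smallest fixed point of f in [0,1] and q_n the smallest fixed point of f_n in [0,1] (these exist, since the fixed-point sets are nonempty—they contain 1—closed subsets of [0,1]). If f_n → f uniformly on [0,1], then q_n → q. -/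
/-!
Write `S g` for the fixed points of `g` in `[0, 1]`. By the intermediate value theorem,
`sInf (S g) ≤ s` as soon as `g s ≤ s`, so `f t > t` below `q`; on a compact interval `[0, r]`
with `r < q` this gap is uniform and survives uniform perturbation, giving `r ≤ q_n` eventually.
Above `q`, strict convexity puts the graph of `f` strictly below the chord joining two fixed
points, so `f s < s` for `q < s < 1`; then eventually `f_n s < s`, and `q_n ≤ s`.
-/

open Set Filter Function

theorem TendstoUniformlyOn.eventually_forall_lt_of_isCompact {α ι : Type*} [TopologicalSpace α]
    {F : ι → α → ℝ} {f u : α → ℝ} {p : Filter ι} {K : Set α}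
    (hF : TendstoUniformlyOn F f p K) (hK : IsCompact K)
    (hfu : ContinuousOn (fun x => f x - u x) K) (hlt : ∀ x ∈ K, u x < f x) :
    ∀ᶠ n in p, ∀ x ∈ K, u x < F n x := by
  obtain ⟨δ, hδ, hδle⟩ := hK.exists_forall_le' hfu (a := 0) fun x hx => sub_pos.2 (hlt x hx)
  filter_upwards [Metric.tendstoUniformlyOn_iff.1 hF δ hδ] with n hn x hx
  have hdist := hn x hx
  rw [Real.dist_eq, abs_lt] at hdist
  linarith [hδle x hx]

theorem StrictConvexOn.lt_self_of_isFixedPt {s : Set ℝ} {f : ℝ → ℝ}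
    (hf : StrictConvexOn ℝ s f) {x y z : ℝ} (hx : x ∈ s) (hy : y ∈ s)
    (hfx : IsFixedPt f x) (hfy : IsFixedPt f y) (hxz : x < z) (hzy : z < y) : f z < z := by
  have hsub : StrictConvexOn ℝ s (fun t => f t - t) := hf.sub_concaveOn (concaveOn_id hf.1)
  simpa only [hfx.eq, hfy.eq, sub_self, max_self, sub_neg] using
    hsub.lt_on_openSegment hx hy (hxz.trans hzy).ne (Ioo_subset_openSegment ⟨hxz, hzy⟩)

section FixedPointsIcc

variable {g : ℝ → ℝ}

theorem sInf_Icc_inter_fixedPoints_le (hg : ContinuousOn g (Icc 0 1)) (hg0 : 0 ≤ g 0)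
    {s : ℝ} (hs : s ∈ Icc (0 : ℝ) 1) (hgs : g s ≤ s) :
    sInf (Icc 0 1 ∩ fixedPoints g) ≤ s := by
  have hcont : ContinuousOn (fun t => g t - t) (Icc 0 s) :=
    (hg.sub continuousOn_id).mono (Icc_subset_Icc_right hs.2)
  obtain ⟨u, hu, hgu⟩ :=
    intermediate_value_Icc' hs.1 hcont ⟨sub_nonpos.2 hgs, by simpa using hg0⟩
  have hfix : u ∈ Icc 0 1 ∩ fixedPoints g :=
    ⟨⟨hu.1, hu.2.trans hs.2⟩, sub_eq_zero.1 hgu⟩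
  exact (csInf_le ⟨0, fun t ht => ht.1.1⟩ hfix).trans hu.2

theorem le_sInf_Icc_inter_fixedPoints (hg1 : g 1 = 1) {r : ℝ}
    (hlt : ∀ t ∈ Icc 0 r, t < g t) : r ≤ sInf (Icc 0 1 ∩ fixedPoints g) :=
  le_csInf ⟨1, ⟨right_mem_Icc.2 zero_le_one, hg1⟩⟩ fun t ht =>
    le_of_not_gt fun htr => (hlt t ⟨ht.1.1, htr.le⟩).ne' ht.2

end FixedPointsIcc

/-- if continuous self-maps `f_n` of `[0,1]` fixing `1` converge uniformly to a
continuous strictly convex self-map `f` of `[0,1]` fixing `1`, then the smallest fixed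
points `q_n` of the `f_n` converge to the smallest fixed point `q` of `f`. -/
theorem smallest_fixed_point_continuity
    (f : ℝ → ℝ) (fn : ℕ → ℝ → ℝ)
    (hf_cont : ContinuousOn f (Set.Icc 0 1))
    (hf_maps : Set.MapsTo f (Set.Icc 0 1) (Set.Icc 0 1))
    (hf_conv : StrictConvexOn ℝ (Set.Icc 0 1) f)
    (hf1 : f 1 = 1)
    (hfn_cont : ∀ n, ContinuousOn (fn n) (Set.Icc 0 1))
    (hfn_maps : ∀ n, Set.MapsTo (fn n) (Set.Icc 0 1) (Set.Icc 0 1))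
    (hfn1 : ∀ n, fn n 1 = 1)
    (hunif : TendstoUniformlyOn fn f Filter.atTop (Set.Icc 0 1)) :
    Filter.Tendsto (fun n => sInf {t : ℝ | t ∈ Set.Icc (0:ℝ) 1 ∧ fn n t = t}) Filter.atTop
      (nhds (sInf {t : ℝ | t ∈ Set.Icc (0:ℝ) 1 ∧ f t = t})) := by
  change Tendsto (fun n => sInf (Icc 0 1 ∩ fixedPoints (fn n))) atTop
    (nhds (sInf (Icc 0 1 ∩ fixedPoints f)))
  have h01 : (1 : ℝ) ∈ Icc 0 1 := right_mem_Icc.2 zero_le_one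
  have hf0 : 0 ≤ f 0 := (hf_maps (left_mem_Icc.2 zero_le_one)).1
  have hfn0 n : 0 ≤ fn n 0 := (hfn_maps n (left_mem_Icc.2 zero_le_one)).1
  have hq1 := sInf_Icc_inter_fixedPoints_le hf_cont hf0 h01 hf1.le
  refine tendsto_order.2 ⟨fun a ha => ?_, fun b hb => ?_⟩
  · obtain ⟨r, har, hrq⟩ := exists_between ha
    have hgap : ∀ t ∈ Icc 0 r, t < f t := fun t ht => lt_of_not_ge fun hft =>
      (sInf_Icc_inter_fixedPoints_le hf_cont hf0 ⟨ht.1, (ht.2.trans hrq.le).trans hq1⟩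
        hft).not_gt (ht.2.trans_lt hrq)
    have hr1 : Icc 0 r ⊆ Icc (0 : ℝ) 1 := Icc_subset_Icc_right (hrq.le.trans hq1)
    filter_upwards [(hunif.mono hr1).eventually_forall_lt_of_isCompact isCompact_Icc
      ((hf_cont.mono hr1).sub continuousOn_id) hgap] with n hn
    exact har.trans_le (le_sInf_Icc_inter_fixedPoints (hfn1 n) hn)
  · rcases lt_or_ge 1 b with hb1 | hb1
    · exact Eventually.of_forall fun n =>
        (sInf_Icc_inter_fixedPoints_le (hfn_cont n) (hfn0 n) h01 (hfn1 n).le).trans_lt hb1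
    obtain ⟨s, hqs, hsb⟩ := exists_between hb
    obtain ⟨p, hp, hps⟩ := exists_lt_of_csInf_lt (s := Icc 0 1 ∩ fixedPoints f) ⟨1, h01, hf1⟩ hqs
    have hs1 : s < 1 := hsb.trans_le hb1
    have hs : s ∈ Icc (0 : ℝ) 1 := ⟨hp.1.1.trans hps.le, hs1.le⟩
    have hfs : f s < s := hf_conv.lt_self_of_isFixedPt hp.1 h01 hp.2 hf1 hps hs1
    filter_upwards [(hunif.tendsto_at hs).eventually_lt_const hfs] with n hn
    exact (sInf_Icc_inter_fixedPoints_le (hfn_cont n) (hfn0 n) hs hn.le).trans_lt hsb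
end
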